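/- arXiv:1701.04914 — 3 statements merged into one kernel-verified Lean document; each statement's English description precedes it below -/
import Mathlib

section
/- Let (D, ⊕, 0̄) be an idempotent commutative monoid whose canonical partial order ⊑ satisfies the descending chain condition. Then every subset S of D has a greatest lower bound (infimum) with respect to ⊑; in particular the infimum of the empty set is 0̄, the greatest element. -/
/-- `v` is a greatest lower bound of the set `s` with respect to the relation `le`. -/
def IsGlbRel {D : Type*} (le : D → D → Prop) (s : Set D) (v : D) : Prop :=
  (∀ a ∈ s, le v a) ∧ ∀ w : D, (∀ a ∈ s, le w a) → le w v

/-!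
By the descending chain condition the finite meets `z ⊕ a₁ ⊕ ⋯ ⊕ aₙ` of elements `aᵢ ∈ S`
contain a minimal one, `m`. Since `m ⊕ a` is again such a meet and lies below `m`, minimality
gives `m ⊕ a = m` for all `a ∈ S`; and a lower bound of `S` lies below every finite meet of
elements of `S`, in particular below `m`.
-/

section

variable {D : Type*} (op : D → D → D)

theorem wellFounded_of_dcc
    (hdcc : ∀ f : ℕ → D, ¬ ∀ n : ℕ, op (f (n + 1)) (f n) = f (n + 1) ∧ f (n + 1) ≠ f n) :
    WellFounded (fun a b => op a b = a ∧ a ≠ b) :=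
  wellFounded_iff_isEmpty_descending_chain.mpr ⟨fun ⟨f, hf⟩ => hdcc f hf⟩

inductive IsFiniteMeet (z : D) (S : Set D) : D → Prop
  | base : IsFiniteMeet z S z
  | step {m a : D} : IsFiniteMeet z S m → a ∈ S → IsFiniteMeet z S (op m a)

variable {op} {z : D} {S : Set D}

theorem IsFiniteMeet.le_of_forall_le (hassoc : ∀ a b c : D, op (op a b) c = op a (op b c))
    (hneut : ∀ a : D, op a z = a) {w d : D} (hw : ∀ a ∈ S, op w a = w)
    (hd : IsFiniteMeet op z S d) : op w d = w := by
  induction hd with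
  | base => exact hneut w
  | step _ ha ih => rw [← hassoc, ih, hw _ ha]

theorem IsFiniteMeet.le_of_minimal (hassoc : ∀ a b c : D, op (op a b) c = op a (op b c))
    (hcomm : ∀ a b : D, op a b = op b a) (hidem : ∀ a : D, op a a = a) {m : D}
    (hm : IsFiniteMeet op z S m)
    (hmin : ∀ p, IsFiniteMeet op z S p → ¬(op p m = p ∧ p ≠ m)) {a : D} (ha : a ∈ S) :
    op m a = m := by
  by_contra hne
  have hle : op (op m a) m = op m a := by rw [hassoc, hcomm a m, ← hassoc, hidem]
  exact hmin _ (hm.step ha) ⟨hle, hne⟩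

end

/-- Let `(D, op, z)` be an idempotent commutative monoid whose canonical
partial order `⊑` (where `a ⊑ b ↔ op a b = a`) satisfies the descending chain condition.
Then every subset `S` of `D` has a greatest lower bound with respect to `⊑`; in particular
the infimum of the empty set is `z` (the greatest element). -/
theorem dcc_has_all_glbs {D : Type*} (op : D → D → D) (z : D)
    (hassoc : ∀ a b c : D, op (op a b) c = op a (op b c))
    (hcomm : ∀ a b : D, op a b = op b a)
    (hidem : ∀ a : D, op a a = a)
    (hneut : ∀ a : D, op a z = a)
    (hdcc : ∀ f : ℕ → D, ¬ ∀ n : ℕ, op (f (n + 1)) (f n) = f (n + 1) ∧ f (n + 1) ≠ f n) :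
    (∀ S : Set D, ∃ v : D, IsGlbRel (fun a b => op a b = a) S v) ∧
      IsGlbRel (fun a b => op a b = a) (∅ : Set D) z := by
  refine ⟨fun S => ?_, fun a ha => absurd ha (Set.notMem_empty a), fun w _ => hneut w⟩
  obtain ⟨m, hm, hmin⟩ :=
    (wellFounded_of_dcc op hdcc).has_min {d | IsFiniteMeet op z S d} ⟨z, .base⟩
  exact ⟨m, fun a ha => hm.le_of_minimal hassoc hcomm hidem hmin ha,
    fun w hw => hm.le_of_forall_le hassoc hneut hw⟩
end

section
/- Let (D, ⊕, ⊗, 0̄, 1̄) be an idempotent semiring whose canonical partial order ⊑ satisfies the descending chain condition, let S ⊆ D be nonempty, and let c ∈ D. Then multiplication distributes over infima: c ⊗ inf S = inf {c ⊗ a : a ∈ S} and (inf S) ⊗ c = inf {a ⊗ c : a ∈ S}, where all infima are taken with respect to ⊑. -/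
section AddCommMonoid

variable {D : Type*} [AddCommMonoid D]

def AddSubmonoid.absorbedBy (w : D) : AddSubmonoid D where
  carrier := {t | w + t = w}
  zero_mem' := add_zero w
  add_mem' {a b} ha hb := by
    simp only [Set.mem_ofPred_eq] at *
    rw [← add_assoc, ha, hb]

theorem exists_mem_closure_forall_add_eq (hidem : ∀ a : D, a + a = a)
    (hwf : WellFounded fun a b : D => a + b = a ∧ a ≠ b) (S : Set D) :
    ∃ v ∈ AddSubmonoid.closure S, ∀ a ∈ S, v + a = v := by
  obtain ⟨v, hv, hmin⟩ := hwf.has_min (AddSubmonoid.closure S) ⟨0, zero_mem _⟩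
  refine ⟨v, hv, fun a ha => ?_⟩
  have hva : v + a ∈ AddSubmonoid.closure S := add_mem hv (AddSubmonoid.subset_closure ha)
  have hle : v + a + v = v + a := by rw [add_right_comm, hidem]
  by_contra hne
  exact hmin _ hva ⟨hle, hne⟩

theorem isGlbRel_map_of_mem_closure (f : D →+ D) {S : Set D} {v : D}
    (hv : v ∈ AddSubmonoid.closure S) (hlb : ∀ a ∈ S, v + a = v) :
    IsGlbRel (fun a b => a + b = a) {x : D | ∃ a ∈ S, x = f a} (f v) := by
  refine ⟨?_, fun w hw => ?_⟩
  · rintro x ⟨a, ha, rfl⟩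
    rw [← map_add, hlb a ha]
  · have hS : S ⊆ (AddSubmonoid.absorbedBy w).comap f := fun a ha => hw _ ⟨a, ha, rfl⟩
    exact AddSubmonoid.closure_le.2 hS hv

end AddCommMonoid

theorem mul_distributes_over_inf_general {D : Type*} [Semiring D]
    (hidem : ∀ a : D, a + a = a)
    (hdcc : ∀ f : ℕ → D, ¬ ∀ n : ℕ, (f (n + 1) + f n = f (n + 1)) ∧ f (n + 1) ≠ f n)
    (S : Set D) (c : D) :
    ∃ v : D, IsGlbRel (fun a b => a + b = a) S v ∧
      IsGlbRel (fun a b => a + b = a) {x : D | ∃ a ∈ S, x = c * a} (c * v) ∧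
      IsGlbRel (fun a b => a + b = a) {x : D | ∃ a ∈ S, x = a * c} (v * c) := by
  have hwf : WellFounded fun a b : D => a + b = a ∧ a ≠ b :=
    wellFounded_iff_isEmpty_descending_chain.2 ⟨fun ⟨f, hf⟩ => hdcc f hf⟩
  obtain ⟨v, hv, hlb⟩ := exists_mem_closure_forall_add_eq hidem hwf S
  have hS : IsGlbRel (fun a b => a + b = a) S v := by
    simpa using isGlbRel_map_of_mem_closure (AddMonoidHom.id D) hv hlb
  exact ⟨v, hS, isGlbRel_map_of_mem_closure (AddMonoidHom.mulLeft c) hv hlb,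
    isGlbRel_map_of_mem_closure (AddMonoidHom.mulRight c) hv hlb⟩

/-- Let `D` be an idempotent semiring (a semiring with idempotent addition)
whose canonical partial order `⊑` (where `a ⊑ b ↔ a + b = a`) satisfies the descending
chain condition, let `S ⊆ D` be nonempty and `c : D`.  Then multiplication distributes over
infima: `S` has an infimum `v`, and `c * v` is the infimum of `{c * a : a ∈ S}` while
`v * c` is the infimum of `{a * c : a ∈ S}` (all infima with respect to `⊑`). -/
theorem mul_distributes_over_inf {D : Type*} [Semiring D]
    (hidem : ∀ a : D, a + a = a)
    (hdcc : ∀ f : ℕ → D, ¬ ∀ n : ℕ, (f (n + 1) + f n = f (n + 1)) ∧ f (n + 1) ≠ f n)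
    (S : Set D) (hS : S.Nonempty) (c : D) :
    ∃ v : D, IsGlbRel (fun a b => a + b = a) S v ∧
      IsGlbRel (fun a b => a + b = a) {x : D | ∃ a ∈ S, x = c * a} (c * v) ∧
      IsGlbRel (fun a b => a + b = a) {x : D | ∃ a ∈ S, x = a * c} (v * c) :=
  mul_distributes_over_inf_general hidem hdcc S c
end

section
/- Let ℛ be a recursive state machine over an idempotent semiring of finite height and A an ℛ-automaton. Then the set post*(L(A)) = { c : there exists c₀ ∈ L(A) with a computation from c₀ to c } of configurations reachable from L(A) is a regular set of configurations, i.e., there exists an ℛ-automaton A' with L(A') = post*(L(A)). -/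
/-! ## Recursive state machines over a semiring -/

/-- A recursive state machine (RSM) over a weight domain `D`: `k` modules, each node/box
belongs to a module (`inMod`, `enMod`, `exMod`, `bxMod`), each box `b` calls module `Y b`.
Call nodes are pairs `(b, e)` and return nodes are pairs `(b, x)`.  Nodes are encoded as
sums: sources of transitions are `In ⊕ En ⊕ (Bx × Ex)` (internal, entry, return nodes) and
targets are `In ⊕ Ex ⊕ (Bx × En)` (internal, exit, call nodes).  `δ` is the transition
relation and `w` the weight function.  Well-formedness is expressed by `RSM.WF`. -/
structure RSM (D : Type) where
  k : ℕ
  In : Type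
  En : Type
  Ex : Type
  Bx : Type
  finIn : Finite In
  finEn : Finite En
  finEx : Finite Ex
  finBx : Finite Bx
  inMod : In → Fin k
  enMod : En → Fin k
  exMod : Ex → Fin k
  bxMod : Bx → Fin k
  Y : Bx → Fin k
  δ : Set ((In ⊕ En ⊕ (Bx × Ex)) × (In ⊕ Ex ⊕ (Bx × En)))
  w : (In ⊕ En ⊕ (Bx × Ex)) × (In ⊕ Ex ⊕ (Bx × En)) → D

namespace RSM

variable {D : Type}

/-- Source nodes: internal, entry, and return nodes. -/
abbrev Src (ρ : RSM D) : Type := ρ.In ⊕ ρ.En ⊕ (ρ.Bx × ρ.Ex)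

/-- Target nodes: internal, exit, and call nodes. -/
abbrev Dst (ρ : RSM D) : Type := ρ.In ⊕ ρ.Ex ⊕ (ρ.Bx × ρ.En)

/-- The module of a source node (a return node `(b, x)` lies in the module of `b`). -/
def srcMod (ρ : RSM D) : ρ.Src → Fin ρ.k
  | Sum.inl u => ρ.inMod u
  | Sum.inr (Sum.inl e) => ρ.enMod e
  | Sum.inr (Sum.inr (b, _)) => ρ.bxMod b

/-- The module of a target node (a call node `(b, e)` lies in the module of `b`). -/
def dstMod (ρ : RSM D) : ρ.Dst → Fin ρ.k
  | Sum.inl u => ρ.inMod u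
  | Sum.inr (Sum.inl x) => ρ.exMod x
  | Sum.inr (Sum.inr (b, _)) => ρ.bxMod b

/-- Validity of a source node: a return node `(b, x)` requires `x ∈ Ex_{Y b}`. -/
def SrcOK (ρ : RSM D) : ρ.Src → Prop
  | Sum.inl _ => True
  | Sum.inr (Sum.inl _) => True
  | Sum.inr (Sum.inr (b, x)) => ρ.exMod x = ρ.Y b

/-- Validity of a target node: a call node `(b, e)` requires `e ∈ En_{Y b}`. -/
def DstOK (ρ : RSM D) : ρ.Dst → Prop
  | Sum.inl _ => True
  | Sum.inr (Sum.inl _) => True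
  | Sum.inr (Sum.inr (b, e)) => ρ.enMod e = ρ.Y b

/-- Well-formedness of an RSM over a semiring: transitions connect valid nodes of the same
module, and every transition into an exit node has weight `1̄`. -/
def WF [Semiring D] (ρ : RSM D) : Prop :=
  (∀ t ∈ ρ.δ, ρ.SrcOK t.1 ∧ ρ.DstOK t.2 ∧ ρ.srcMod t.1 = ρ.dstMod t.2) ∧
  (∀ t ∈ ρ.δ, ∀ x : ρ.Ex, t.2 = Sum.inr (Sum.inl x) → ρ.w t = 1)

/-- A configuration: a (source) node together with a stack of boxes (top first). -/
abbrev Conf (ρ : RSM D) : Type := ρ.Src × List ρ.Bx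

/-- Validity of a configuration `(u, b₁ … b_r)`: the node `u` is valid, consecutive boxes
satisfy `Y b_{i+1} = ` module of `b_i`, and `u` lies in module `Y b₁` if the stack is
nonempty. -/
def ConfOK (ρ : RSM D) (c : ρ.Conf) : Prop :=
  ρ.SrcOK c.1 ∧ List.Chain' (fun a b => ρ.Y b = ρ.bxMod a) c.2 ∧
    ∀ b ∈ c.2.head?, ρ.srcMod c.1 = ρ.Y b

/-- The weighted transition relation on configurations: internal transitions keep the
stack, call transitions push the box and move to the called entry, return transitions pop
the top box `b` and move to the return node `(b, x)`. -/
inductive Step (ρ : RSM D) : ρ.Conf → ρ.Conf → D → Prop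
  | internal {u : ρ.Src} {u' : ρ.In} {S : List ρ.Bx}
      (h : (u, Sum.inl u') ∈ ρ.δ) :
      Step ρ (u, S) (Sum.inl u', S) (ρ.w (u, Sum.inl u'))
  | call {u : ρ.Src} {b : ρ.Bx} {e : ρ.En} {S : List ρ.Bx}
      (h : (u, Sum.inr (Sum.inr (b, e))) ∈ ρ.δ) :
      Step ρ (u, S) (Sum.inr (Sum.inl e), b :: S) (ρ.w (u, Sum.inr (Sum.inr (b, e))))
  | ret {u : ρ.Src} {b : ρ.Bx} {x : ρ.Ex} {S : List ρ.Bx}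
      (h : (u, Sum.inr (Sum.inl x)) ∈ ρ.δ) :
      Step ρ (u, b :: S) (Sum.inr (Sum.inr (b, x)), S) (ρ.w (u, Sum.inr (Sum.inl x)))

/-- `Comp ρ c c' v`: there is a computation (finite sequence of steps) from `c` to `c'`
whose weight (the ordered product of the step weights, empty product `1̄`) is `v`. -/
inductive Comp [Semiring D] (ρ : RSM D) : ρ.Conf → ρ.Conf → D → Prop
  | refl (c : ρ.Conf) : Comp ρ c c 1
  | tail {c c' c'' : ρ.Conf} {v v' : D} :
      Comp ρ c c' v → Step ρ c' c'' v' → Comp ρ c c'' (v * v')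

end RSM

/-! ## Configuration automata -/

/-- A configuration automaton for an RSM `ρ`: states are pairs of a (source) node of `ρ`
and a mark (a natural number); transitions are labeled by `Option ρ.Bx` (`none` for
`ε`-transitions, `some b` for `b`-transitions) and carry weights `wt`; `I` and `F` are the
initial and final states.  Well-formedness is expressed by `ConfAut.WF`. -/
structure ConfAut {D : Type} (ρ : RSM D) where
  Q : Set (ρ.Src × ℕ)
  trans : Set ((ρ.Src × ℕ) × Option ρ.Bx × (ρ.Src × ℕ))
  wt : (ρ.Src × ℕ) × Option ρ.Bx × (ρ.Src × ℕ) → D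
  I : Set (ρ.Src × ℕ)
  F : Set (ρ.Src × ℕ)

namespace ConfAut

variable {D : Type} {ρ : RSM D}

/-- Well-formedness of a configuration automaton: finitely many states carrying valid
nodes; initial and final states are states; final states carry entry nodes; a
`b`-transition goes from a state with an entry node of the called module `Y b` to a state
with an entry node of the module of `b`; an `ε`-transition points to a state with an entry
node `e` and starts either at a state with the same node `e`, or at a state with an
internal or return node of the module of `e`; and every state carrying an entry node has an
`ε`-self-loop of weight `1̄`. -/
def WF [Semiring D] (A : ConfAut ρ) : Prop :=
  A.Q.Finite ∧
  (∀ q ∈ A.Q, ρ.SrcOK q.1) ∧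
  A.I ⊆ A.Q ∧ A.F ⊆ A.Q ∧
  (∀ q ∈ A.F, ∃ e : ρ.En, q.1 = Sum.inr (Sum.inl e)) ∧
  (∀ t ∈ A.trans, t.1 ∈ A.Q ∧ t.2.2 ∈ A.Q) ∧
  (∀ t ∈ A.trans, ∀ b : ρ.Bx, t.2.1 = some b →
      ∃ e e' : ρ.En, t.1.1 = Sum.inr (Sum.inl e) ∧ t.2.2.1 = Sum.inr (Sum.inl e') ∧
        ρ.enMod e = ρ.Y b ∧ ρ.enMod e' = ρ.bxMod b) ∧
  (∀ t ∈ A.trans, t.2.1 = none →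
      ∃ e : ρ.En, t.2.2.1 = Sum.inr (Sum.inl e) ∧
        (t.1.1 = Sum.inr (Sum.inl e) ∨
          (ρ.srcMod t.1.1 = ρ.enMod e ∧ ∀ e' : ρ.En, t.1.1 ≠ Sum.inr (Sum.inl e')))) ∧
  (∀ q ∈ A.Q, ∀ e : ρ.En, q.1 = Sum.inr (Sum.inl e) →
      (q, none, q) ∈ A.trans ∧ A.wt (q, none, q) = 1)

/-- `RunL A q L q'`: the list `L` of transitions of `A` forms a run from `q` to `q'`. -/
inductive RunL (A : ConfAut ρ) :
    (ρ.Src × ℕ) → List ((ρ.Src × ℕ) × Option ρ.Bx × (ρ.Src × ℕ)) → (ρ.Src × ℕ) → Prop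
  | nil (q : ρ.Src × ℕ) : RunL A q [] q
  | cons {q q' qf : ρ.Src × ℕ} {o : Option ρ.Bx}
      {L : List ((ρ.Src × ℕ) × Option ρ.Bx × (ρ.Src × ℕ))} :
      (q, o, q') ∈ A.trans → RunL A q' L qf → RunL A q ((q, o, q') :: L) qf

/-- The label of a run: the word over the boxes spelled by its `b`-transitions. -/
def runLabel (L : List ((ρ.Src × ℕ) × Option ρ.Bx × (ρ.Src × ℕ))) : List ρ.Bx :=
  L.filterMap (fun t => t.2.1)

/-- The weight of a run: the product of its transition weights taken in reverse order. -/
def runWt [Semiring D] (A : ConfAut ρ)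
    (L : List ((ρ.Src × ℕ) × Option ρ.Bx × (ρ.Src × ℕ))) : D :=
  (L.reverse.map A.wt).prod

/-- A configuration `(u, S)` is accepted by `A` if some run from an initial state `(u, m)`
to a final state is labeled by `S` and has weight `≠ 0̄`. -/
def Accepts [Semiring D] (A : ConfAut ρ) (c : ρ.Conf) : Prop :=
  ∃ (m : ℕ) (L : List ((ρ.Src × ℕ) × Option ρ.Bx × (ρ.Src × ℕ))) (qf : ρ.Src × ℕ),
    (c.1, m) ∈ A.I ∧ qf ∈ A.F ∧ A.RunL (c.1, m) L qf ∧
      runLabel L = c.2 ∧ A.runWt L ≠ 0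

/-- The set of configurations accepted by `A`. -/
def Lang [Semiring D] (A : ConfAut ρ) : Set ρ.Conf := { c | A.Accepts c }

/-- The set of marks used by the states of `A`. -/
def marks (A : ConfAut ρ) : Set ℕ := { m | ∃ u : ρ.Src, (u, m) ∈ A.Q }

end ConfAut

/-! A computation starting in a configuration `(u₀, P₀ ++ T)` of `L(A)` first pops `P₀`
down to some node `w`, leaving `T` untouched, and then climbs above `T`, pushing a new stack
prefix `P` through a chain of pending calls. The automaton for `post*` keeps a shifted copy of
`A` to read `T`, and adds a fresh state `(u, 0)` for every node `u`: from `(u, 0)` it reads `P`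
by following the pending calls downwards, which depends on the machine alone, and then jumps
into the copy of `A` at the state that `A` reaches after reading `P₀`.

The jump forgets the run of `A` on `P₀`, whose weight ranges over a possibly infinite set `X`.
In an idempotent semiring of finite height some finite sum `W` of elements of `X` absorbs all
of `X`, so that `a * W ≠ 0` iff `a * x ≠ 0` for some `x ∈ X`: weighting the jump by `W` keeps
exactly the configurations of nonzero weight. -/

namespace RSM

variable {D : Type} {ρ : RSM D}

def CanStep (ρ : RSM D) (c c' : ρ.Conf) : Prop := ∃ v, ρ.Step c c' v

abbrev Reach (ρ : RSM D) : ρ.Conf → ρ.Conf → Prop := Relation.ReflTransGen ρ.CanStep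

theorem exists_comp_iff_reach [Semiring D] {c c' : ρ.Conf} :
    (∃ v, ρ.Comp c c' v) ↔ ρ.Reach c c' := by
  constructor
  · rintro ⟨v, h⟩
    induction h with
    | refl => exact .refl
    | tail _ hs ih => exact ih.tail ⟨_, hs⟩
  · intro h
    induction h with
    | refl => exact ⟨1, .refl _⟩
    | tail _ hs ih =>
      obtain ⟨v, hv⟩ := ih
      obtain ⟨v', hs⟩ := hs
      exact ⟨v * v', hv.tail hs⟩

theorem Step.append_stack {c c' : ρ.Conf} {v : D} (h : ρ.Step c c' v) (T : List ρ.Bx) :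
    ρ.Step (c.1, c.2 ++ T) (c'.1, c'.2 ++ T) v := by
  cases h with
  | internal h => exact .internal h
  | call h => exact .call h
  | ret h => exact .ret h

theorem Reach.append_stack {u u' : ρ.Src} {S S' : List ρ.Bx} (h : ρ.Reach (u, S) (u', S'))
    (T : List ρ.Bx) : ρ.Reach (u, S ++ T) (u', S' ++ T) :=
  h.lift (fun c => (c.1, c.2 ++ T)) fun _ _ ⟨v, hs⟩ => ⟨v, hs.append_stack T⟩

theorem Reach.call {c : ρ.Conf} {u : ρ.Src} {S : List ρ.Bx} {b : ρ.Bx} {e : ρ.En}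
    (h : ρ.Reach c (u, S)) (hδ : (u, Sum.inr (Sum.inr (b, e))) ∈ ρ.δ) :
    ρ.Reach c (Sum.inr (Sum.inl e), b :: S) :=
  h.tail ⟨_, .call hδ⟩

theorem eq_of_reach_entry {c : ρ.Conf} {e : ρ.En}
    (h : ρ.Reach c (Sum.inr (Sum.inl e), [])) : c = (Sum.inr (Sum.inl e), []) := by
  cases h.cases_tail with
  | inl h => exact h.symm
  | inr h =>
    obtain ⟨_, -, _, hs⟩ := h
    cases hs

theorem eq_or_forall_ne_of_reach {c : ρ.Conf} {u : ρ.Src} (h : ρ.Reach c (u, [])) :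
    (∃ e : ρ.En, u = Sum.inr (Sum.inl e) ∧ c = (u, [])) ∨
      ∀ e : ρ.En, u ≠ Sum.inr (Sum.inl e) := by
  by_cases hu : ∃ e : ρ.En, u = Sum.inr (Sum.inl e)
  · obtain ⟨e, rfl⟩ := hu
    exact .inl ⟨e, rfl, eq_of_reach_entry h⟩
  · exact .inr fun e he => hu ⟨e, he⟩

def SameLevel (ρ : RSM D) (u u' : ρ.Src) : Prop := ρ.Reach (u, []) (u', [])

theorem SameLevel.refl (u : ρ.Src) : ρ.SameLevel u u := Relation.ReflTransGen.refl

theorem SameLevel.trans {u u' u'' : ρ.Src} (h : ρ.SameLevel u u') (h' : ρ.SameLevel u' u'') :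
    ρ.SameLevel u u'' :=
  Relation.ReflTransGen.trans h h'

theorem SameLevel.internal {u u' : ρ.Src} {i : ρ.In} (h : ρ.SameLevel u u')
    (hδ : (u', Sum.inl i) ∈ ρ.δ) : ρ.SameLevel u (Sum.inl i) :=
  Relation.ReflTransGen.tail h ⟨_, .internal hδ⟩

theorem SameLevel.call_ret {w₁ u : ρ.Src} {b : ρ.Bx} {e : ρ.En} {x : ρ.Ex}
    (hcall : (w₁, Sum.inr (Sum.inr (b, e))) ∈ ρ.δ) (h : ρ.SameLevel (Sum.inr (Sum.inl e)) u)
    (hret : (u, Sum.inr (Sum.inl x)) ∈ ρ.δ) : ρ.SameLevel w₁ (Sum.inr (Sum.inr (b, x))) := by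
  have hbody : ρ.Reach (Sum.inr (Sum.inl e), [b]) (u, [b]) := h.append_stack [b]
  exact ((Reach.call .refl hcall).trans hbody).tail ⟨_, .ret hret⟩

/-- `Climb ρ w u P`: from `(w, T)` the machine reaches `(u, P ++ T)` without ever touching
`T`. The pending calls are recorded from the bottom of `P` upwards. -/
inductive Climb (ρ : RSM D) : ρ.Src → ρ.Src → List ρ.Bx → Prop
  | base {w u : ρ.Src} : ρ.SameLevel w u → Climb ρ w u []
  | push {w w₁ u : ρ.Src} {b : ρ.Bx} {e : ρ.En} {P : List ρ.Bx} :
      ρ.SameLevel w w₁ → (w₁, Sum.inr (Sum.inr (b, e))) ∈ ρ.δ →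
      Climb ρ (Sum.inr (Sum.inl e)) u P → Climb ρ w u (P ++ [b])

namespace Climb

variable {w u : ρ.Src} {P : List ρ.Bx}

theorem sameLevel (h : ρ.Climb w u []) : ρ.SameLevel w u := by
  generalize hP : ([] : List ρ.Bx) = P at h
  cases h with
  | base h => exact h
  | push _ _ _ => simp at hP

theorem tail {u' : ρ.Src} (h : ρ.Climb w u P) (h' : ρ.SameLevel u u') : ρ.Climb w u' P := by
  induction h with
  | base h => exact base (h.trans h')
  | push hw hcall _ ih => exact push hw hcall (ih h')

theorem call {b : ρ.Bx} {e : ρ.En} (h : ρ.Climb w u P)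
    (hδ : (u, Sum.inr (Sum.inr (b, e))) ∈ ρ.δ) :
    ρ.Climb w (Sum.inr (Sum.inl e)) (b :: P) := by
  induction h with
  | base h => exact push (P := []) h hδ (base (.refl _))
  | push hw hcall _ ih => exact push hw hcall (ih hδ)

theorem ret {x : ρ.Ex} (h : ρ.Climb w u P) (hδ : (u, Sum.inr (Sum.inl x)) ∈ ρ.δ)
    {b : ρ.Bx} {P₂ : List ρ.Bx} (hP : P = b :: P₂) :
    ρ.Climb w (Sum.inr (Sum.inr (b, x))) P₂ := by
  induction h generalizing P₂ with
  | base => cases hP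
  | @push w w₁ u b₀ e P₁ hw hcall hup ih =>
    cases P₁ with
    | nil =>
      obtain ⟨rfl, rfl⟩ : b₀ = b ∧ [] = P₂ := by simpa using hP
      exact base (hw.trans (SameLevel.call_ret hcall hup.sameLevel hδ))
    | cons b₁ P₁ =>
      obtain ⟨rfl, rfl⟩ : b₁ = b ∧ P₁ ++ [b₀] = P₂ := by simpa using hP
      exact push hw hcall (ih hδ rfl)

end Climb

theorem Reach.exists_pop_climb {c₀ c : ρ.Conf} (h : ρ.Reach c₀ c) :
    ∃ (P₀ T P : List ρ.Bx) (w : ρ.Src), c₀.2 = P₀ ++ T ∧ c.2 = P ++ T ∧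
      ρ.Reach (c₀.1, P₀) (w, []) ∧ ρ.Climb w c.1 P := by
  induction h with
  | refl => exact ⟨[], c₀.2, [], c₀.1, rfl, rfl, .refl, .base (.refl _)⟩
  | tail _ hs ih =>
    obtain ⟨P₀, T, P, w, hc₀, hc, hpop, hclimb⟩ := ih
    obtain ⟨v, hs⟩ := hs
    cases hs with
    | internal hδ =>
      exact ⟨P₀, T, P, w, hc₀, hc, hpop, hclimb.tail ((SameLevel.refl _).internal hδ)⟩
    | call hδ => exact ⟨P₀, T, _ :: P, w, hc₀, by simpa using hc, hpop, hclimb.call hδ⟩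
    | @ret u b x S hδ =>
      cases P with
      | nil =>
        have hret : ρ.Reach (c₀.1, P₀ ++ [b]) (Sum.inr (Sum.inr (b, x)), []) :=
          ((hpop.append_stack [b]).trans (hclimb.sameLevel.append_stack [b])).tail ⟨_, .ret hδ⟩
        exact ⟨P₀ ++ [b], S, [], _, by simp_all, rfl, hret, .base (.refl _)⟩
      | cons b' P₂ =>
        obtain ⟨rfl, rfl⟩ : b' = b ∧ P₂ ++ T = S := by simpa using hc.symm
        exact ⟨P₀, T, P₂, w, hc₀, rfl, hpop, hclimb.ret hδ rfl⟩

/-- `ρ.bottomMod m S` is the module of the bottom frame of a configuration with stack `S`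
whose current node lies in module `m`. -/
def bottomMod (ρ : RSM D) : Fin ρ.k → List ρ.Bx → Fin ρ.k
  | m, [] => m
  | _, b :: S => bottomMod ρ (ρ.bxMod b) S

theorem confOK_nil_iff {u : ρ.Src} : ρ.ConfOK (u, []) ↔ ρ.SrcOK u :=
  ⟨fun h => h.1, fun h => ⟨h, List.isChain_nil, by simp⟩⟩

variable [Semiring D] {c c' : ρ.Conf}

theorem Step.bottomMod_eq (hρ : ρ.WF) {v : D} (h : ρ.Step c c' v) :
    ρ.bottomMod (ρ.srcMod c'.1) c'.2 = ρ.bottomMod (ρ.srcMod c.1) c.2 := by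
  cases h with
  | @internal _ _ S h => exact congrArg (ρ.bottomMod · S) (hρ.1 _ h).2.2.symm
  | @call _ _ _ S h => exact congrArg (ρ.bottomMod · S) (hρ.1 _ h).2.2.symm
  | ret _ => rfl

theorem Step.confOK (hρ : ρ.WF) {v : D} (h : ρ.Step c c' v) (hc : ρ.ConfOK c) :
    ρ.ConfOK c' := by
  obtain ⟨-, hchain, hhead⟩ := hc
  cases h with
  | internal h => exact ⟨trivial, hchain, fun b hb => (hρ.1 _ h).2.2.symm.trans (hhead b hb)⟩
  | call h =>
    refine ⟨trivial, List.isChain_cons.2 ⟨?_, hchain⟩, ?_⟩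
    · exact fun b hb => (hhead b hb).symm.trans (hρ.1 _ h).2.2
    · rintro b ⟨⟩
      exact (hρ.1 _ h).2.1
  | ret h =>
    obtain ⟨hb, hchain⟩ := List.isChain_cons.1 hchain
    exact ⟨(hρ.1 _ h).2.2.symm.trans (hhead _ rfl), hchain, fun b' hb' => (hb b' hb').symm⟩

theorem Reach.bottomMod_eq (hρ : ρ.WF) (h : ρ.Reach c c') :
    ρ.bottomMod (ρ.srcMod c'.1) c'.2 = ρ.bottomMod (ρ.srcMod c.1) c.2 := by
  induction h with
  | refl => rfl
  | tail _ hs ih => exact (hs.choose_spec.bottomMod_eq hρ).trans ih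

theorem Reach.confOK (hρ : ρ.WF) (h : ρ.Reach c c') (hc : ρ.ConfOK c) : ρ.ConfOK c' := by
  induction h with
  | refl => exact hc
  | tail _ hs ih => exact hs.choose_spec.confOK hρ ih

theorem SameLevel.srcMod_eq (hρ : ρ.WF) {u u' : ρ.Src} (h : ρ.SameLevel u u') :
    ρ.srcMod u' = ρ.srcMod u :=
  Reach.bottomMod_eq hρ h

theorem SameLevel.srcOK (hρ : ρ.WF) {u u' : ρ.Src} (h : ρ.SameLevel u u') (hu : ρ.SrcOK u) :
    ρ.SrcOK u' :=
  confOK_nil_iff.1 (Reach.confOK hρ h (confOK_nil_iff.2 hu))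

end RSM

namespace ConfAut

variable {D : Type} {ρ : RSM D} {A : ConfAut ρ}

abbrev Transition (ρ : RSM D) : Type := (ρ.Src × ℕ) × Option ρ.Bx × (ρ.Src × ℕ)

@[simp]
theorem runLabel_nil : runLabel ([] : List (Transition ρ)) = [] := rfl

@[simp]
theorem runLabel_cons (t : Transition ρ) (L : List (Transition ρ)) :
    runLabel (t :: L) = t.2.1.toList ++ runLabel L := by
  cases h : t.2.1 <;> simp [runLabel, h]

@[simp]
theorem runLabel_append (L₁ L₂ : List (Transition ρ)) :
    runLabel (L₁ ++ L₂) = runLabel L₁ ++ runLabel L₂ := by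
  simp [runLabel]

theorem RunL.append {q q' q'' : ρ.Src × ℕ} {L₁ L₂ : List (Transition ρ)}
    (h₁ : A.RunL q L₁ q') (h₂ : A.RunL q' L₂ q'') : A.RunL q (L₁ ++ L₂) q'' := by
  induction h₁ with
  | nil => exact h₂
  | cons ht _ ih => exact .cons ht (ih h₂)

theorem RunL.split {q qf : ρ.Src × ℕ} {L : List (Transition ρ)} (h : A.RunL q L qf)
    {P₀ T : List ρ.Bx} (hl : runLabel L = P₀ ++ T) :
    ∃ qm L₁ L₂, L = L₁ ++ L₂ ∧ A.RunL q L₁ qm ∧ A.RunL qm L₂ qf ∧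
      runLabel L₁ = P₀ ∧ runLabel L₂ = T := by
  induction h generalizing P₀ with
  | nil q =>
    obtain ⟨rfl, rfl⟩ := List.append_eq_nil_iff.1 hl.symm
    exact ⟨q, [], [], rfl, .nil _, .nil _, rfl, rfl⟩
  | @cons q q' _ o L ht hr ih =>
    cases P₀ with
    | nil => exact ⟨q, [], _, rfl, .nil _, .cons ht hr, rfl, hl⟩
    | cons p P₀ =>
      cases o with
      | none =>
        obtain ⟨qm, L₁, L₂, rfl, h₁, h₂, hl₁, rfl⟩ :=
          ih (P₀ := p :: P₀) (by simpa using hl)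
        exact ⟨qm, _ :: L₁, L₂, rfl, .cons ht h₁, h₂, by simpa using hl₁, rfl⟩
      | some b =>
        obtain ⟨rfl, hL⟩ : b = p ∧ runLabel L = P₀ ++ T := by simpa using hl
        obtain ⟨qm, L₁, L₂, rfl, h₁, h₂, hl₁, rfl⟩ := ih hL
        exact ⟨qm, _ :: L₁, L₂, rfl, .cons ht h₁, h₂, by simpa using hl₁, rfl⟩

variable [Semiring D]

theorem runWt_cons (t : Transition ρ) (L : List (Transition ρ)) :
    A.runWt (t :: L) = A.runWt L * A.wt t := by
  simp [runWt]

theorem runWt_append (L₁ L₂ : List (Transition ρ)) :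
    A.runWt (L₁ ++ L₂) = A.runWt L₂ * A.runWt L₁ := by
  simp [runWt]

namespace WF

variable {q q' : ρ.Src × ℕ}

theorem srcOK (hA : A.WF) (hq : q ∈ A.Q) : ρ.SrcOK q.1 := hA.2.1 q hq

theorem I_subset (hA : A.WF) : A.I ⊆ A.Q := hA.2.2.1

theorem exists_entry_of_mem_F (hA : A.WF) (hq : q ∈ A.F) :
    ∃ e : ρ.En, q.1 = Sum.inr (Sum.inl e) :=
  hA.2.2.2.2.1 q hq

theorem source_mem (hA : A.WF) {o : Option ρ.Bx} (ht : (q, o, q') ∈ A.trans) : q ∈ A.Q :=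
  (hA.2.2.2.2.2.1 _ ht).1

theorem target_mem (hA : A.WF) {o : Option ρ.Bx} (ht : (q, o, q') ∈ A.trans) : q' ∈ A.Q :=
  (hA.2.2.2.2.2.1 _ ht).2

theorem some_trans (hA : A.WF) {b : ρ.Bx} (ht : (q, some b, q') ∈ A.trans) :
    ∃ e e' : ρ.En, q.1 = Sum.inr (Sum.inl e) ∧ q'.1 = Sum.inr (Sum.inl e') ∧
      ρ.enMod e = ρ.Y b ∧ ρ.enMod e' = ρ.bxMod b :=
  hA.2.2.2.2.2.2.1 _ ht b rfl

theorem none_trans (hA : A.WF) (ht : (q, none, q') ∈ A.trans) :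
    ∃ e : ρ.En, q'.1 = Sum.inr (Sum.inl e) ∧
      (q.1 = Sum.inr (Sum.inl e) ∨
        (ρ.srcMod q.1 = ρ.enMod e ∧ ∀ e' : ρ.En, q.1 ≠ Sum.inr (Sum.inl e'))) :=
  hA.2.2.2.2.2.2.2.1 _ ht rfl

theorem srcMod_eq_of_none_trans (hA : A.WF) (ht : (q, none, q') ∈ A.trans) :
    ρ.srcMod q.1 = ρ.srcMod q'.1 := by
  obtain ⟨e, he', he | ⟨hmod, -⟩⟩ := hA.none_trans ht <;> simp_all [RSM.srcMod]

theorem srcMod_of_some_trans (hA : A.WF) {b : ρ.Bx} (ht : (q, some b, q') ∈ A.trans) :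
    ρ.srcMod q.1 = ρ.Y b ∧ ρ.srcMod q'.1 = ρ.bxMod b := by
  obtain ⟨e, e', he, he', hY, hmod⟩ := hA.some_trans ht
  simp_all [RSM.srcMod]

end WF

namespace RunL

variable {q r : ρ.Src × ℕ} {L : List (Transition ρ)}

theorem mem_Q (hA : A.WF) (h : A.RunL q L r) (hq : q ∈ A.Q) : r ∈ A.Q := by
  induction h with
  | nil => exact hq
  | cons ht _ ih => exact ih (hA.target_mem ht)

theorem fst_eq_of_runLabel_eq_nil (hA : A.WF) (h : A.RunL q L r) (hl : runLabel L = [])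
    {e : ρ.En} (he : q.1 = Sum.inr (Sum.inl e)) : r.1 = q.1 := by
  induction h generalizing e with
  | nil => rfl
  | @cons q q' _ o _ ht _ ih =>
    cases o with
    | some b => simp at hl
    | none =>
      obtain ⟨e', he', hq | ⟨-, hne⟩⟩ := hA.none_trans ht
      · rw [ih (by simpa using hl) he', he', hq]
      · exact absurd he (hne e)

theorem bottomMod_eq (hA : A.WF) (h : A.RunL q L r) :
    ρ.bottomMod (ρ.srcMod q.1) (runLabel L) = ρ.srcMod r.1 := by
  induction h with
  | nil => rfl
  | @cons q q' _ o _ ht _ ih =>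
    cases o with
    | none => simpa [hA.srcMod_eq_of_none_trans ht] using ih
    | some b => simpa [RSM.bottomMod, (hA.srcMod_of_some_trans ht).2] using ih

theorem confOK (hA : A.WF) (h : A.RunL q L r) (hq : q ∈ A.Q) : ρ.ConfOK (q.1, runLabel L) := by
  induction h with
  | nil => exact RSM.confOK_nil_iff.2 (hA.srcOK hq)
  | @cons q q' _ o _ ht _ ih =>
    obtain ⟨-, hchain, hhead⟩ := ih (hA.target_mem ht)
    cases o with
    | none =>
      refine ⟨hA.srcOK hq, by simpa using hchain, fun b hb => ?_⟩
      rw [hA.srcMod_eq_of_none_trans ht]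
      exact hhead b (by simpa using hb)
    | some b =>
      obtain ⟨hY, hmod⟩ := hA.srcMod_of_some_trans ht
      refine ⟨hA.srcOK hq, ?_, ?_⟩
      · exact List.isChain_cons.2 ⟨fun b' hb' => (hhead b' hb').symm.trans hmod, hchain⟩
      · rintro _ ⟨⟩
        exact hY

end RunL

/-- A cut just before an `ε`-transition leaving an internal or return node is moved past that
transition, so that the cut lies at an entry node. -/
theorem RunL.split_at_entry (hA : A.WF) {q qf : ρ.Src × ℕ} {L : List (Transition ρ)}
    (h : A.RunL q L qf) (hq : q ∈ A.Q) (hf : qf ∈ A.F) {P₀ T : List ρ.Bx}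
    (hl : runLabel L = P₀ ++ T) :
    ∃ qm L₁ L₂, L = L₁ ++ L₂ ∧ A.RunL q L₁ qm ∧ A.RunL qm L₂ qf ∧
      runLabel L₁ = P₀ ∧ runLabel L₂ = T ∧ qm ∈ A.Q ∧
      ∃ e : ρ.En, qm.1 = Sum.inr (Sum.inl e) := by
  obtain ⟨qm, L₁, L₂, rfl, h₁, h₂, rfl, rfl⟩ := h.split hl
  have hqm : qm ∈ A.Q := h₁.mem_Q hA hq
  cases h₂ with
  | nil => exact ⟨_, L₁, [], rfl, h₁, .nil _, rfl, rfl, hqm, hA.exists_entry_of_mem_F hf⟩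
  | @cons _ q' _ o L₂ ht hr =>
    cases o with
    | some b =>
      obtain ⟨e, -, he, -⟩ := hA.some_trans ht
      exact ⟨qm, L₁, _, rfl, h₁, .cons ht hr, rfl, rfl, hqm, e, he⟩
    | none =>
      obtain ⟨e, he', he | -⟩ := hA.none_trans ht
      · exact ⟨qm, L₁, _, rfl, h₁, .cons ht hr, rfl, rfl, hqm, e, he⟩
      · exact ⟨q', L₁ ++ [(qm, none, q')], L₂, by simp, h₁.append (.cons ht (.nil _)),
          hr, by simp, by simp, hA.target_mem ht, e, he'⟩

end ConfAut

section AbsorbingSum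

variable {D : Type} [Semiring D]

def IsAbsorbingSum (X : Set D) (W : D) : Prop :=
  (∃ l : List D, (∀ y ∈ l, y ∈ X) ∧ l.sum = W) ∧ ∀ x ∈ X, W + x = W

/-- Adding a non-absorbed element of `X` to a finite sum strictly descends in the natural
order, so finite height stops this process at an absorbing sum. -/
theorem exists_isAbsorbingSum (hidem : ∀ a : D, a + a = a)
    (hheight : ∃ H : ℕ, ∀ f : ℕ → D, ∀ n : ℕ,
      (∀ i < n, (f (i + 1) + f i = f (i + 1)) ∧ f (i + 1) ≠ f i) → n ≤ H)
    (X : Set D) : ∃ W, IsAbsorbingSum X W := by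
  by_contra! hX
  have hgrow (l : List D) (hl : ∀ y ∈ l, y ∈ X) : ∃ x ∈ X, l.sum + x ≠ l.sum := by
    by_contra! h
    exact hX _ ⟨⟨l, hl, rfl⟩, h⟩
  choose next hnextX hnext using hgrow
  let chain : ℕ → {l : List D // ∀ y ∈ l, y ∈ X} := fun n =>
    n.rec ⟨[], by simp⟩ fun _ l =>
      ⟨next l.1 l.2 :: l.1, List.forall_mem_cons.2 ⟨hnextX _ _, l.2⟩⟩
  obtain ⟨H, hH⟩ := hheight
  have := hH (fun n => (chain n).1.sum) (H + 1) fun i _ => by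
    refine ⟨?_, ?_⟩
    · change next _ _ + (chain i).1.sum + (chain i).1.sum = next _ _ + (chain i).1.sum
      rw [add_assoc, hidem]
    · change next _ _ + (chain i).1.sum ≠ (chain i).1.sum
      rw [add_comm]
      exact hnext _ _
  omega

theorem IsAbsorbingSum.mul_ne_zero_iff {X : Set D} {W : D} (hW : IsAbsorbingSum X W) (a : D) :
    a * W ≠ 0 ↔ ∃ x ∈ X, a * x ≠ 0 := by
  obtain ⟨⟨l, hlX, rfl⟩, habs⟩ := hW
  constructor
  · intro h
    by_contra! h0
    apply h
    rw [← List.map_id l, ← List.sum_map_mul_left, List.sum_eq_zero]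
    simpa using fun y hy => h0 y (hlX y hy)
  · rintro ⟨x, hx, hax⟩ h0
    have := congrArg (a * ·) (habs x hx)
    simp only [mul_add, h0, zero_add] at this
    exact hax this

end AbsorbingSum

namespace PostStar

open ConfAut

variable {D : Type} {ρ : RSM D}

def shift (q : ρ.Src × ℕ) : ρ.Src × ℕ := (q.1, q.2 + 1)

def shiftTransition (t : Transition ρ) : Transition ρ := (shift t.1, t.2.1, shift t.2.2)

theorem shift_injective : Function.Injective (shift : ρ.Src × ℕ → ρ.Src × ℕ) := by
  rintro ⟨u, m⟩ ⟨u', m'⟩ h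
  simp_all [shift]

theorem runLabel_map_shiftTransition (L : List (Transition ρ)) :
    runLabel (L.map shiftTransition) = runLabel L := by
  simp [runLabel, List.filterMap_map, shiftTransition, Function.comp_def]

variable [Semiring D] (ρ) (A : ConfAut ρ)

def popWeights (u : ρ.Src) (q : ρ.Src × ℕ) : Set D :=
  {d | ∃ q₀ ∈ A.I, ∃ L, A.RunL q₀ L q ∧ ρ.Reach (q₀.1, runLabel L) (u, []) ∧
    A.runWt L = d}

def popCallWeights (u : ρ.Src) (b : ρ.Bx) (q : ρ.Src × ℕ) : Set D :=
  {d | ∃ (w : ρ.Src) (e : ρ.En), u = Sum.inr (Sum.inl e) ∧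
    (w, Sum.inr (Sum.inr (b, e))) ∈ ρ.δ ∧ d ∈ popWeights ρ A w q}

/-- Transitions of the `post*` automaton, whose states are a fresh state `(u, 0)` for every
node `u` and a shifted copy `(a, m + 1)` of every state `(a, m)` of `A`. The fresh part reads
the frames pushed since leaving `L(A)`, then jumps into the copy of `A`, which reads the
untouched rest of the stack. -/
inductive IsTrans : Transition ρ → Prop
  | shift {a a' : ρ.Src} {m m' : ℕ} {o : Option ρ.Bx} :
      ((a, m), o, (a', m')) ∈ A.trans → IsTrans ((a, m + 1), o, (a', m' + 1))
  | sameLevel {u : ρ.Src} {e : ρ.En} :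
      ρ.SameLevel (Sum.inr (Sum.inl e)) u → ρ.SrcOK u →
      (u = Sum.inr (Sum.inl e) ∨ ∀ e' : ρ.En, u ≠ Sum.inr (Sum.inl e')) →
      IsTrans ((u, 0), none, (Sum.inr (Sum.inl e), 0))
  | call {e e' : ρ.En} {w : ρ.Src} {b : ρ.Bx} :
      ρ.SameLevel (Sum.inr (Sum.inl e')) w → (w, Sum.inr (Sum.inr (b, e))) ∈ ρ.δ →
      IsTrans ((Sum.inr (Sum.inl e), 0), some b, (Sum.inr (Sum.inl e'), 0))
  | pop {u : ρ.Src} {q : ρ.Src × ℕ} :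
      (popWeights ρ A u q).Nonempty → q ∈ A.Q →
      (∃ e : ρ.En, q.1 = Sum.inr (Sum.inl e)) →
      ρ.SrcOK u → (u = q.1 ∨ ∀ e' : ρ.En, u ≠ Sum.inr (Sum.inl e')) →
      IsTrans ((u, 0), none, (q.1, q.2 + 1))
  | popCall {u : ρ.Src} {b : ρ.Bx} {q : ρ.Src × ℕ} :
      (popCallWeights ρ A u b q).Nonempty → q ∈ A.Q →
      (∃ e : ρ.En, q.1 = Sum.inr (Sum.inl e)) →
      IsTrans ((u, 0), some b, (q.1, q.2 + 1))

def weight (W : Set D → D) : Transition ρ → D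
  | ((a, m + 1), o, (a', m' + 1)) => A.wt ((a, m), o, (a', m'))
  | ((u, 0), none, (a, m + 1)) => W (popWeights ρ A u (a, m))
  | ((u, 0), some b, (a, m + 1)) => W (popCallWeights ρ A u b (a, m))
  | (_, _, (_, 0)) => 1

def postAut (W : Set D → D) : ConfAut ρ where
  Q := (fun u => (u, 0)) '' {u | ρ.SrcOK u} ∪ shift '' A.Q
  trans := {t | IsTrans ρ A t}
  wt := weight ρ A W
  I := (fun u => (u, 0)) '' {u | ρ.SrcOK u}
  F := shift '' A.F

variable {ρ A} {W : Set D → D}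

theorem srcMod_eq_of_mem_popWeights (hρ : ρ.WF) (hA : A.WF) {u : ρ.Src} {q : ρ.Src × ℕ}
    {x : D} (hx : x ∈ popWeights ρ A u q) : ρ.srcMod u = ρ.srcMod q.1 := by
  obtain ⟨q₀, -, L, hrun, hpop, -⟩ := hx
  exact (hpop.bottomMod_eq hρ).trans (hrun.bottomMod_eq hA)

theorem IsTrans.mem_Q (hA : A.WF) {t : Transition ρ} (ht : IsTrans ρ A t) :
    t.1 ∈ (postAut ρ A W).Q ∧ t.2.2 ∈ (postAut ρ A W).Q := by
  have hentry (e : ρ.En) : ((Sum.inr (Sum.inl e), 0) : ρ.Src × ℕ) ∈ (postAut ρ A W).Q :=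
    .inl ⟨Sum.inr (Sum.inl e), trivial, rfl⟩
  cases ht with
  | shift h =>
    exact ⟨.inr ⟨_, hA.source_mem h, rfl⟩, .inr ⟨_, hA.target_mem h, rfl⟩⟩
  | sameLevel _ hu _ => exact ⟨.inl ⟨_, hu, rfl⟩, hentry _⟩
  | call _ _ => exact ⟨hentry _, hentry _⟩
  | pop _ hq _ hu _ => exact ⟨.inl ⟨_, hu, rfl⟩, .inr ⟨_, hq, rfl⟩⟩
  | popCall hx hq _ =>
    obtain ⟨_, _, e, rfl, -⟩ := hx
    exact ⟨hentry e, .inr ⟨_, hq, rfl⟩⟩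

theorem IsTrans.some_wf (hρ : ρ.WF) (hA : A.WF) {q q' : ρ.Src × ℕ} {b : ρ.Bx}
    (ht : IsTrans ρ A (q, some b, q')) :
    ∃ e e' : ρ.En, q.1 = Sum.inr (Sum.inl e) ∧ q'.1 = Sum.inr (Sum.inl e') ∧
      ρ.enMod e = ρ.Y b ∧ ρ.enMod e' = ρ.bxMod b := by
  cases ht with
  | shift h => exact (hA.some_trans h :)
  | @call e e' _ _ hsl hδ =>
    exact ⟨e, e', rfl, rfl, (hρ.1 _ hδ).2.1, (hsl.srcMod_eq hρ).symm.trans (hρ.1 _ hδ).2.2⟩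
  | popCall hx _ hq' =>
    obtain ⟨x, w, e, rfl, hδ, hx⟩ := hx
    obtain ⟨e', he'⟩ := hq'
    refine ⟨e, e', rfl, he', (hρ.1 _ hδ).2.1, ?_⟩
    have hmod : ρ.srcMod w = ρ.enMod e' := by
      rw [srcMod_eq_of_mem_popWeights hρ hA hx, he']
      rfl
    exact hmod.symm.trans (hρ.1 _ hδ).2.2

theorem IsTrans.none_wf (hρ : ρ.WF) (hA : A.WF) {q q' : ρ.Src × ℕ}
    (ht : IsTrans ρ A (q, none, q')) :
    ∃ e : ρ.En, q'.1 = Sum.inr (Sum.inl e) ∧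
      (q.1 = Sum.inr (Sum.inl e) ∨
        (ρ.srcMod q.1 = ρ.enMod e ∧ ∀ e' : ρ.En, q.1 ≠ Sum.inr (Sum.inl e'))) := by
  cases ht with
  | shift h => exact (hA.none_trans h :)
  | @sameLevel _ e hsl _ hshape =>
    exact ⟨e, rfl, hshape.imp_right fun h => ⟨hsl.srcMod_eq hρ, h⟩⟩
  | pop hx _ hq' _ hshape =>
    obtain ⟨x, hx⟩ := hx
    obtain ⟨e, he⟩ := hq'
    refine ⟨e, he, hshape.imp (fun h => h.trans he) fun h => ⟨?_, h⟩⟩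
    rw [srcMod_eq_of_mem_popWeights hρ hA hx, he]
    rfl

theorem postAut_wf (hρ : ρ.WF) (hA : A.WF) (W : Set D → D) : (postAut ρ A W).WF := by
  have := ρ.finIn; have := ρ.finEn; have := ρ.finEx; have := ρ.finBx
  obtain ⟨hfin, -, -, hFQ, -, -, -, -, hloop⟩ := id hA
  refine ⟨((Set.toFinite _).image _).union (hfin.image _), ?_, Set.subset_union_left,
    (Set.image_mono hFQ).trans Set.subset_union_right, ?_, fun t ht => ht.mem_Q hA,
    fun ⟨q, o, q'⟩ ht b hb => ?_, fun ⟨q, o, q'⟩ ht hn => ?_, ?_⟩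
  · rintro _ (⟨u, hu, rfl⟩ | ⟨q, hq, rfl⟩)
    exacts [hu, (hA.srcOK hq :)]
  · rintro _ ⟨q, hq, rfl⟩
    exact (hA.exists_entry_of_mem_F hq :)
  · cases hb
    exact IsTrans.some_wf hρ hA ht
  · cases hn
    exact IsTrans.none_wf hρ hA ht
  · rintro _ (⟨u, -, rfl⟩ | ⟨q, hq, rfl⟩) e he
    · cases he
      exact ⟨.sameLevel (.refl _) trivial (.inl rfl), rfl⟩
    · exact ⟨.shift (hloop q hq e he).1, (hloop q hq e he).2⟩

theorem runWt_map_shiftTransition (L : List (Transition ρ)) :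
    (postAut ρ A W).runWt (L.map shiftTransition) = A.runWt L := by
  simp only [runWt, ← List.map_reverse, List.map_map]
  rfl

theorem runL_map_shiftTransition {q r : ρ.Src × ℕ} {L : List (Transition ρ)}
    (h : A.RunL q L r) : (postAut ρ A W).RunL (shift q) (L.map shiftTransition) (shift r) := by
  induction h with
  | nil => exact .nil _
  | cons ht _ ih => exact .cons (IsTrans.shift ht) ih

theorem exists_eq_map_shiftTransition {L : List (Transition ρ)} {a : ρ.Src} {m : ℕ}
    {r : ρ.Src × ℕ} (h : (postAut ρ A W).RunL (a, m + 1) L r) :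
    ∃ (LA : List (Transition ρ)) (r₀ : ρ.Src × ℕ), r = shift r₀ ∧
      A.RunL (a, m) LA r₀ ∧ L = LA.map shiftTransition := by
  induction L generalizing a m with
  | nil =>
    cases h
    exact ⟨[], (a, m), rfl, .nil _, rfl⟩
  | cons t L ih =>
    obtain _ | ⟨ht, hr⟩ := h
    obtain @⟨_, a', _, m', o, ht⟩ := (ht : IsTrans ρ A _)
    obtain ⟨LA, r₀, rfl, hrun, rfl⟩ := ih hr
    exact ⟨_ :: LA, r₀, rfl, .cons ht hrun, rfl⟩

theorem Climb.exists_runL (hρ : ρ.WF) {w u : ρ.Src} {P : List ρ.Bx} (h : ρ.Climb w u P)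
    {e : ρ.En} (hw : w = Sum.inr (Sum.inl e)) :
    ∃ Lp, (postAut ρ A W).RunL (u, 0) Lp (Sum.inr (Sum.inl e), 0) ∧ runLabel Lp = P ∧
      (postAut ρ A W).runWt Lp = 1 := by
  induction h generalizing e with
  | @base _ u hsl =>
    subst hw
    have hshape : u = Sum.inr (Sum.inl e) ∨ ∀ e' : ρ.En, u ≠ Sum.inr (Sum.inl e') :=
      (RSM.eq_or_forall_ne_of_reach hsl).imp_left fun ⟨_, _, hc⟩ => (Prod.ext_iff.1 hc).1.symm
    exact ⟨[_], .cons (IsTrans.sameLevel hsl (hsl.srcOK hρ trivial) hshape) (.nil _), rfl,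
      by simp [runWt, postAut, weight]⟩
  | push hsl hδ _ ih =>
    subst hw
    obtain ⟨Lp, hrun, hlabel, hwt⟩ := ih rfl
    refine ⟨Lp ++ [(_, some _, _)], hrun.append (.cons (IsTrans.call hsl hδ) (.nil _)),
      by simp [hlabel], ?_⟩
    rw [runWt_append, hwt, mul_one]
    simp [runWt, postAut, weight]

theorem eq_or_forall_ne_of_runL_reach (hA : A.WF) {q₀ qm : ρ.Src × ℕ}
    {L₁ : List (Transition ρ)} (h₁ : A.RunL q₀ L₁ qm) {u : ρ.Src}
    (hpop : ρ.Reach (q₀.1, runLabel L₁) (u, [])) :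
    u = qm.1 ∨ ∀ e : ρ.En, u ≠ Sum.inr (Sum.inl e) := by
  refine (RSM.eq_or_forall_ne_of_reach hpop).imp_left fun ⟨e, hu, hc⟩ => ?_
  obtain ⟨hq₀, hl⟩ := Prod.ext_iff.1 hc
  exact ((h₁.fst_eq_of_runLabel_eq_nil hA hl (hq₀.trans hu)).trans hq₀).symm

theorem accepts_of_jump (hW : ∀ X, IsAbsorbingSum X (W X)) {u : ρ.Src} (hu : ρ.SrcOK u)
    {Lp : List (Transition ρ)} {p : ρ.Src × ℕ} (hLp : (postAut ρ A W).RunL (u, 0) Lp p)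
    (hLp_wt : (postAut ρ A W).runWt Lp = 1) {o : Option ρ.Bx} {qm : ρ.Src × ℕ}
    (hjump : IsTrans ρ A (p, o, shift qm)) {X : Set D}
    (hX : weight ρ A W (p, o, shift qm) = W X) {x : D} (hx : x ∈ X)
    {L₂ : List (Transition ρ)} {qf : ρ.Src × ℕ} (h₂ : A.RunL qm L₂ qf) (hf : qf ∈ A.F)
    (hwt : A.runWt L₂ * x ≠ 0) :
    (postAut ρ A W).Accepts (u, runLabel Lp ++ o.toList ++ runLabel L₂) := by
  refine ⟨0, Lp ++ (p, o, shift qm) :: L₂.map shiftTransition, shift qf, ⟨u, hu, rfl⟩,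
    ⟨qf, hf, rfl⟩, hLp.append (.cons hjump (runL_map_shiftTransition h₂)), ?_, ?_⟩
  · simp [runLabel_map_shiftTransition]
  · rw [runWt_append, runWt_cons, runWt_map_shiftTransition, hLp_wt, mul_one]
    change A.runWt L₂ * weight ρ A W _ ≠ 0
    rw [hX, (hW X).mul_ne_zero_iff]
    exact ⟨x, hx, hwt⟩

theorem accepts_postAut_of_reach (hρ : ρ.WF) (hA : A.WF) (hW : ∀ X, IsAbsorbingSum X (W X))
    {c₀ c : ρ.Conf} (hacc : A.Accepts c₀) (hreach : ρ.Reach c₀ c) :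
    (postAut ρ A W).Accepts c := by
  obtain ⟨m₀, L, qf, hI, hf, hrun, hlabel, hwt⟩ := hacc
  have hq₀ := hA.I_subset hI
  have hc : ρ.SrcOK c.1 := by
    have hc₀ := hrun.confOK hA hq₀
    rw [hlabel] at hc₀
    exact (hreach.confOK hρ hc₀).1
  obtain ⟨P₀, T, P, w, hc₀, hcT, hpop, hclimb⟩ := hreach.exists_pop_climb
  obtain ⟨qm, L₁, L₂, rfl, h₁, h₂, rfl, rfl, hqm, hqm_entry⟩ :=
    hrun.split_at_entry hA hq₀ hf (hlabel.trans hc₀)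
  rw [runWt_append] at hwt
  obtain ⟨u, S⟩ := c
  obtain rfl : S = P ++ runLabel L₂ := hcT
  cases hclimb with
  | base hsl =>
    have hx : A.runWt L₁ ∈ popWeights ρ A u qm := ⟨_, hI, L₁, h₁, hpop.trans hsl, rfl⟩
    have hjump := IsTrans.pop ⟨_, hx⟩ hqm hqm_entry hc
      (eq_or_forall_ne_of_runL_reach hA h₁ (hpop.trans hsl))
    simpa using accepts_of_jump hW hc (.nil _) rfl hjump rfl hx h₂ hf hwt
  | push hsl hδ hclimb =>
    obtain ⟨Lp, hLp, rfl, hLp_wt⟩ := Climb.exists_runL hρ hclimb rfl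
    have hx : A.runWt L₁ ∈ popCallWeights ρ A _ _ qm :=
      ⟨_, _, rfl, hδ, _, hI, L₁, h₁, hpop.trans hsl, rfl⟩
    have hjump := IsTrans.popCall ⟨_, hx⟩ hqm hqm_entry
    simpa using accepts_of_jump hW hc hLp hLp_wt hjump rfl hx h₂ hf hwt

theorem exists_accepts_of_mem_popWeights {u : ρ.Src} {q r : ρ.Src × ℕ} {x : D}
    (hx : x ∈ popWeights ρ A u q) {L : List (Transition ρ)} (h : A.RunL q L r) (hr : r ∈ A.F)
    (hwt : A.runWt L * x ≠ 0) : ∃ c₀, A.Accepts c₀ ∧ ρ.Reach c₀ (u, runLabel L) := by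
  obtain ⟨q₀, hI, L₁, h₁, hpop, rfl⟩ := hx
  have hacc : A.Accepts (q₀.1, runLabel L₁ ++ runLabel L) :=
    ⟨q₀.2, L₁ ++ L, r, hI, hr, h₁.append h, by simp, by rwa [runWt_append]⟩
  exact ⟨_, hacc, by simpa using hpop.append_stack (runLabel L)⟩

theorem exists_runL_of_jump (hW : ∀ X, IsAbsorbingSum X (W X)) {q qf : ρ.Src × ℕ}
    {L : List (Transition ρ)} (h : (postAut ρ A W).RunL (q.1, q.2 + 1) L qf)
    (hf : qf ∈ (postAut ρ A W).F) {X : Set D} (hwt : (postAut ρ A W).runWt L * W X ≠ 0) :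
    ∃ LA r x, x ∈ X ∧ A.RunL q LA r ∧ r ∈ A.F ∧ A.runWt LA * x ≠ 0 ∧
      L = LA.map shiftTransition := by
  obtain ⟨LA, r, rfl, hrun, rfl⟩ := exists_eq_map_shiftTransition h
  rw [runWt_map_shiftTransition, (hW X).mul_ne_zero_iff] at hwt
  obtain ⟨x, hx, hxwt⟩ := hwt
  obtain ⟨r', hr', hrr⟩ := hf
  obtain rfl := shift_injective hrr
  exact ⟨LA, r', x, hx, hrun, hr', hxwt, rfl⟩

theorem exists_accepts_of_runL (hW : ∀ X, IsAbsorbingSum X (W X)) {L : List (Transition ρ)}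
    {u : ρ.Src} {qf : ρ.Src × ℕ} (h : (postAut ρ A W).RunL (u, 0) L qf)
    (hf : qf ∈ (postAut ρ A W).F) (hwt : (postAut ρ A W).runWt L ≠ 0) :
    ∃ c₀, A.Accepts c₀ ∧ ρ.Reach c₀ (u, runLabel L) := by
  induction L generalizing u with
  | nil =>
    cases h
    obtain ⟨q, -, hq⟩ := hf
    simp [shift] at hq
  | cons t L ih =>
    obtain _ | ⟨ht, hr⟩ := h
    rw [runWt_cons] at hwt
    cases (ht : IsTrans ρ A _) with
    | sameLevel hsl _ _ =>
      obtain ⟨c₀, hacc, hreach⟩ := ih hr (by simpa [postAut, weight] using hwt)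
      exact ⟨c₀, hacc, by simpa using hreach.trans (hsl.append_stack (runLabel L))⟩
    | call hsl hδ =>
      obtain ⟨c₀, hacc, hreach⟩ := ih hr (by simpa [postAut, weight] using hwt)
      exact ⟨c₀, hacc, by
        simpa using RSM.Reach.call (hreach.trans (hsl.append_stack (runLabel L))) hδ⟩
    | @pop _ q _ _ _ _ _ =>
      obtain ⟨LA, r, x, hx, hrun, hrF, hxwt, rfl⟩ := exists_runL_of_jump hW hr hf hwt
      obtain ⟨c₀, hacc, hreach⟩ := exists_accepts_of_mem_popWeights hx hrun hrF hxwt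
      exact ⟨c₀, hacc, by simpa [runLabel_map_shiftTransition] using hreach⟩
    | @popCall _ b q _ _ _ =>
      obtain ⟨LA, r, x, hx, hrun, hrF, hxwt, rfl⟩ := exists_runL_of_jump hW hr hf hwt
      obtain ⟨w, e, rfl, hδ, hx⟩ := hx
      obtain ⟨c₀, hacc, hreach⟩ := exists_accepts_of_mem_popWeights hx hrun hrF hxwt
      exact ⟨c₀, hacc, by simpa [runLabel_map_shiftTransition] using hreach.call hδ⟩

theorem lang_postAut (hρ : ρ.WF) (hA : A.WF) (hW : ∀ X, IsAbsorbingSum X (W X)) :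
    (postAut ρ A W).Lang = {c | ∃ c₀ ∈ A.Lang, ρ.Reach c₀ c} := by
  ext ⟨u, S⟩
  constructor
  · rintro ⟨m, L, qf, ⟨u, -, hu⟩, hf, hrun, rfl, hwt⟩
    cases hu
    exact exists_accepts_of_runL hW hrun hf hwt
  · rintro ⟨c₀, hacc, hreach⟩
    exact accepts_postAut_of_reach hρ hA hW hacc hreach

end PostStar

/-- Let `ρ` be a recursive state machine over an idempotent semiring of
finite height and `A` a configuration automaton for `ρ`.  Then the set
`post*(L(A)) = { c | ∃ c₀ ∈ L(A), there is a computation from c₀ to c }` of configurations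
reachable from `L(A)` is a regular set of configurations: there exists a configuration
automaton `A'` for `ρ` with `L(A') = post*(L(A))`. -/
theorem post_star_regular {D : Type} [Semiring D]
    (hidem : ∀ a : D, a + a = a)
    (hheight : ∃ H : ℕ, ∀ f : ℕ → D, ∀ n : ℕ,
      (∀ i < n, (f (i + 1) + f i = f (i + 1)) ∧ f (i + 1) ≠ f i) → n ≤ H)
    (ρ : RSM D) (hρ : ρ.WF)
    (A : ConfAut ρ) (hA : A.WF) :
    ∃ A' : ConfAut ρ, A'.WF ∧
      A'.Lang = { c : ρ.Conf | ∃ c₀ ∈ A.Lang, ∃ v : D, RSM.Comp ρ c₀ c v } := by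
  choose W hW using exists_isAbsorbingSum hidem hheight
  refine ⟨PostStar.postAut ρ A W, PostStar.postAut_wf hρ hA W, ?_⟩
  simp only [RSM.exists_comp_iff_reach]
  exact PostStar.lang_postAut hρ hA hW
end
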